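/- arXiv:math/0608707 — 7 statements merged into one kernel-verified Lean document; each statement's English description precedes it below -/
import Mathlib

section
/- Let 𝔐 = (V,⟨·,·⟩,A) be Jacobi–Tsankov. Then J(x)∘J(x) = 0 for every x ∈ V. -/
/-!
Skew-symmetry of `A` in its first two slots and nondegeneracy of `⟨·,·⟩` make `𝒜(x,x) = 0`,
so `J(u) u = 0` and, by commutativity, `J(u) J(y) u = J(y) J(u) u = 0` for all `u, y`.
Polarizing `J` at `u ± w` writes `J(u) w` as `½ (J(u - w) u - J(u + w) u)`, hence
`J(u) J(u) w = 0`.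
-/

noncomputable section

/-- The Jacobi operator `J(x) : y ↦ 𝒜(y,x)x` of a (tri)linear curvature operator `𝒜`. -/
def jacobiOp {V : Type*} [AddCommGroup V] [Module ℝ V]
    (Aop : V →ₗ[ℝ] V →ₗ[ℝ] V →ₗ[ℝ] V) (x : V) : V →ₗ[ℝ] V where
  toFun y := Aop y x x
  map_add' y z := by simp
  map_smul' c y := by simp

/-- The polarized Jacobi operator `J(x,y) : z ↦ ½(𝒜(z,x)y + 𝒜(z,y)x)`. -/
def jacobiPol {V : Type*} [AddCommGroup V] [Module ℝ V]
    (Aop : V →ₗ[ℝ] V →ₗ[ℝ] V →ₗ[ℝ] V) (x y : V) : V →ₗ[ℝ] V where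
  toFun z := (1/2 : ℝ) • (Aop z x y + Aop z y x)
  map_add' a b := by simp [smul_add]; abel
  map_smul' c a := by simp [smul_add, smul_comm c]

namespace JacobiTsankov

variable {V : Type*} [AddCommGroup V] [Module ℝ V] {Aop : V →ₗ[ℝ] V →ₗ[ℝ] V →ₗ[ℝ] V}

theorem isAlt_of_skew (B : LinearMap.BilinForm ℝ V)
    (hBnd : ∀ x : V, (∀ y : V, B x y = 0) → x = 0)
    (hA1 : ∀ x y z w : V, B (Aop x y z) w = - B (Aop y x z) w) :
    Aop.IsAlt := by
  intro x
  ext z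
  refine hBnd _ fun y => ?_
  have h := hA1 x x z y
  linarith

@[simp]
theorem jacobiOp_apply (x y : V) : jacobiOp Aop x y = Aop y x x := rfl

theorem jacobiOp_apply_self (hAlt : Aop.IsAlt) (x : V) : jacobiOp Aop x x = 0 := by
  simp [hAlt.self_eq_zero]

theorem jacobiOp_apply_eq_polarization (hAlt : Aop.IsAlt) (u w : V) :
    jacobiOp Aop u w = (2 : ℝ)⁻¹ • (jacobiOp Aop (u - w) u - jacobiOp Aop (u + w) u) := by
  have hswap : Aop w u = -Aop u w := (hAlt.neg u w).symm
  simp only [jacobiOp_apply, map_add, map_sub, LinearMap.add_apply, LinearMap.sub_apply,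
    hAlt.self_eq_zero, hswap, LinearMap.neg_apply, LinearMap.zero_apply]
  module

theorem jacobiOp_apply_jacobiOp_apply_self_of_commute (hAlt : Aop.IsAlt)
    (hJT : ∀ x y : V, jacobiOp Aop x ∘ₗ jacobiOp Aop y = jacobiOp Aop y ∘ₗ jacobiOp Aop x)
    (u y : V) : jacobiOp Aop u (jacobiOp Aop y u) = 0 := by
  rw [← LinearMap.comp_apply, hJT, LinearMap.comp_apply, jacobiOp_apply_self hAlt, map_zero]

theorem jacobiOp_comp_self_of_commute (hAlt : Aop.IsAlt)
    (hJT : ∀ x y : V, jacobiOp Aop x ∘ₗ jacobiOp Aop y = jacobiOp Aop y ∘ₗ jacobiOp Aop x)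
    (u : V) : jacobiOp Aop u ∘ₗ jacobiOp Aop u = 0 := by
  ext w
  rw [LinearMap.comp_apply, jacobiOp_apply_eq_polarization hAlt u w, map_smul, map_sub,
    jacobiOp_apply_jacobiOp_apply_self_of_commute hAlt hJT,
    jacobiOp_apply_jacobiOp_apply_self_of_commute hAlt hJT, sub_zero, smul_zero,
    LinearMap.zero_apply]

end JacobiTsankov

theorem jacobiTsankov_jacobi_sq_zero_general
    {V : Type*} [AddCommGroup V] [Module ℝ V]
    -- a nondegenerate symmetric bilinear form ⟨·,·⟩ on V
    (B : LinearMap.BilinForm ℝ V)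
    (hBnd : ∀ x : V, (∀ y : V, B x y = 0) → x = 0)
    -- the curvature operator 𝒜, with `A x y z w = ⟨𝒜(x,y)z, w⟩`
    (Aop : V →ₗ[ℝ] V →ₗ[ℝ] V →ₗ[ℝ] V)
    -- A(x,y,z,w) = -A(y,x,z,w)
    (hA1 : ∀ x y z w : V, B (Aop x y z) w = - B (Aop y x z) w)
    -- 𝔐 is Jacobi–Tsankov
    (hJT : ∀ x y : V, jacobiOp Aop x ∘ₗ jacobiOp Aop y = jacobiOp Aop y ∘ₗ jacobiOp Aop x) :
    ∀ x : V, jacobiOp Aop x ∘ₗ jacobiOp Aop x = 0 :=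
  JacobiTsankov.jacobiOp_comp_self_of_commute (JacobiTsankov.isAlt_of_skew B hBnd hA1) hJT

/-- If `𝔐 = (V,⟨·,·⟩,A)` is Jacobi–Tsankov, then `J(x) ∘ J(x) = 0`
for every `x ∈ V`. -/
theorem jacobiTsankov_jacobi_sq_zero
    {V : Type*} [AddCommGroup V] [Module ℝ V] [FiniteDimensional ℝ V]
    -- a nondegenerate symmetric bilinear form ⟨·,·⟩ on V
    (B : LinearMap.BilinForm ℝ V)
    (hBsymm : ∀ x y : V, B x y = B y x)
    (hBnd : ∀ x : V, (∀ y : V, B x y = 0) → x = 0)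
    -- the curvature operator 𝒜, with `A x y z w = ⟨𝒜(x,y)z, w⟩`
    (Aop : V →ₗ[ℝ] V →ₗ[ℝ] V →ₗ[ℝ] V)
    -- A(x,y,z,w) = -A(y,x,z,w)
    (hA1 : ∀ x y z w : V, B (Aop x y z) w = - B (Aop y x z) w)
    -- A(x,y,z,w) = A(z,w,x,y)
    (hA2 : ∀ x y z w : V, B (Aop x y z) w = B (Aop z w x) y)
    -- first Bianchi identity
    (hA3 : ∀ x y z w : V, B (Aop x y z) w + B (Aop y z x) w + B (Aop z x y) w = 0)
    -- 𝔐 is Jacobi–Tsankov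
    (hJT : ∀ x y : V, jacobiOp Aop x ∘ₗ jacobiOp Aop y = jacobiOp Aop y ∘ₗ jacobiOp Aop x) :
    ∀ x : V, jacobiOp Aop x ∘ₗ jacobiOp Aop x = 0 :=
  jacobiTsankov_jacobi_sq_zero_general B hBnd Aop hA1 hJT
end
end

section
/- Let 𝔐 = (V,⟨·,·⟩,A) be Jacobi–Tsankov. Then for every x ∈ V the Jacobi operator J(x) is a nilpotent endomorphism of V; in particular 0 is the only real eigenvalue of J(x) for every x, so 𝔐 is Osserman. -/
noncomputable section

/-!
Skew-symmetry `𝒜(x,y) = -𝒜(y,x)` gives `J(x)x = 0`, so commutation yields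
`J(x)J(y)x = J(y)J(x)x = 0` for every `y`. Polarizing, `J(x+z)x = J(z)x - J(x)z`, and applying
`J(x)` to this identity gives `J(x)²z = 0`. A square-zero operator has no nonzero eigenvalue.
-/

theorem LinearMap.apply_swap_eq_neg_of_bilinForm {V : Type*} [AddCommGroup V] [Module ℝ V]
    (B : LinearMap.BilinForm ℝ V) (hBnd : ∀ x : V, (∀ y : V, B x y = 0) → x = 0)
    (Aop : V →ₗ[ℝ] V →ₗ[ℝ] V →ₗ[ℝ] V)
    (hA1 : ∀ x y z w : V, B (Aop x y z) w = - B (Aop y x z) w) (x y z : V) :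
    Aop x y z = - Aop y x z := by
  rw [← sub_eq_zero, sub_neg_eq_add]
  exact hBnd _ fun w => by rw [map_add, LinearMap.add_apply, hA1, neg_add_cancel]

theorem LinearMap.apply_self_eq_zero_of_swap_eq_neg {V : Type*} [AddCommGroup V] [Module ℝ V]
    {Aop : V →ₗ[ℝ] V →ₗ[ℝ] V →ₗ[ℝ] V} (hanti : ∀ x y z : V, Aop x y z = - Aop y x z)
    (x z : V) : Aop x x z = 0 := by
  have h : (2 : ℝ) • Aop x x z = 0 := by
    linear_combination (norm := module) hanti x x z
  exact (smul_eq_zero.mp h).resolve_left two_ne_zero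

namespace jacobiOp

variable {V : Type*} [AddCommGroup V] [Module ℝ V] {Aop : V →ₗ[ℝ] V →ₗ[ℝ] V →ₗ[ℝ] V}

theorem add_apply_self (hanti : ∀ x y z : V, Aop x y z = - Aop y x z) (x z : V) :
    jacobiOp Aop (x + z) x = jacobiOp Aop z x - jacobiOp Aop x z := by
  simp only [jacobiOp, LinearMap.coe_mk, AddHom.coe_mk, map_add, LinearMap.add_apply,
    LinearMap.apply_self_eq_zero_of_swap_eq_neg hanti, hanti x z x]
  abel

theorem apply_apply_self (hanti : ∀ x y z : V, Aop x y z = - Aop y x z)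
    (hJT : ∀ x y : V, jacobiOp Aop x ∘ₗ jacobiOp Aop y = jacobiOp Aop y ∘ₗ jacobiOp Aop x)
    (x y : V) : jacobiOp Aop x (jacobiOp Aop y x) = 0 := by
  rw [← LinearMap.comp_apply, hJT, LinearMap.comp_apply]
  exact (congrArg _ (LinearMap.apply_self_eq_zero_of_swap_eq_neg hanti x x)).trans (map_zero _)

theorem sq_eq_zero (hanti : ∀ x y z : V, Aop x y z = - Aop y x z)
    (hJT : ∀ x y : V, jacobiOp Aop x ∘ₗ jacobiOp Aop y = jacobiOp Aop y ∘ₗ jacobiOp Aop x)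
    (x : V) : jacobiOp Aop x ^ 2 = 0 := by
  ext z
  have h := apply_apply_self hanti hJT x (x + z)
  rw [add_apply_self hanti, map_sub, apply_apply_self hanti hJT, zero_sub, neg_eq_zero] at h
  simpa [pow_two] using h

end jacobiOp

theorem jacobiTsankov_osserman_general
    {V : Type*} [AddCommGroup V] [Module ℝ V]
    -- a nondegenerate symmetric bilinear form ⟨·,·⟩ on V
    (B : LinearMap.BilinForm ℝ V)
    (hBnd : ∀ x : V, (∀ y : V, B x y = 0) → x = 0)
    -- the curvature operator 𝒜, with `A x y z w = ⟨𝒜(x,y)z, w⟩`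
    (Aop : V →ₗ[ℝ] V →ₗ[ℝ] V →ₗ[ℝ] V)
    -- A(x,y,z,w) = -A(y,x,z,w)
    (hA1 : ∀ x y z w : V, B (Aop x y z) w = - B (Aop y x z) w)
    -- 𝔐 is Jacobi–Tsankov
    (hJT : ∀ x y : V, jacobiOp Aop x ∘ₗ jacobiOp Aop y = jacobiOp Aop y ∘ₗ jacobiOp Aop x) :
    ∀ x : V, IsNilpotent (jacobiOp Aop x) ∧
      ∀ c : ℝ, Module.End.HasEigenvalue (jacobiOp Aop x) c → c = 0 := by
  intro x
  have hanti := LinearMap.apply_swap_eq_neg_of_bilinForm B hBnd Aop hA1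
  have hnil : IsNilpotent (jacobiOp Aop x) := ⟨2, jacobiOp.sq_eq_zero hanti hJT x⟩
  exact ⟨hnil, fun c hc => (hc.isNilpotent_of_isNilpotent hnil).eq_zero⟩

/-- If `𝔐 = (V,⟨·,·⟩,A)` is Jacobi–Tsankov, then every Jacobi operator
`J(x)` is nilpotent; in particular `0` is the only real eigenvalue of `J(x)` for
every `x`, so `𝔐` is Osserman. -/
theorem jacobiTsankov_osserman
    {V : Type*} [AddCommGroup V] [Module ℝ V] [FiniteDimensional ℝ V]
    -- a nondegenerate symmetric bilinear form ⟨·,·⟩ on V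
    (B : LinearMap.BilinForm ℝ V)
    (hBsymm : ∀ x y : V, B x y = B y x)
    (hBnd : ∀ x : V, (∀ y : V, B x y = 0) → x = 0)
    -- the curvature operator 𝒜, with `A x y z w = ⟨𝒜(x,y)z, w⟩`
    (Aop : V →ₗ[ℝ] V →ₗ[ℝ] V →ₗ[ℝ] V)
    -- A(x,y,z,w) = -A(y,x,z,w)
    (hA1 : ∀ x y z w : V, B (Aop x y z) w = - B (Aop y x z) w)
    -- A(x,y,z,w) = A(z,w,x,y)
    (hA2 : ∀ x y z w : V, B (Aop x y z) w = B (Aop z w x) y)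
    -- first Bianchi identity
    (hA3 : ∀ x y z w : V, B (Aop x y z) w + B (Aop y z x) w + B (Aop z x y) w = 0)
    -- 𝔐 is Jacobi–Tsankov
    (hJT : ∀ x y : V, jacobiOp Aop x ∘ₗ jacobiOp Aop y = jacobiOp Aop y ∘ₗ jacobiOp Aop x) :
    ∀ x : V, IsNilpotent (jacobiOp Aop x) ∧
      ∀ c : ℝ, Module.End.HasEigenvalue (jacobiOp Aop x) c → c = 0 :=
  jacobiTsankov_osserman_general B hBnd Aop hA1 hJT
end
end

section
/- Let ⟨·,·⟩ be a positive definite inner product on the finite-dimensional real vector space V, and let A be an algebraic curvature tensor on (V,⟨·,·⟩) such that 𝔐 = (V,⟨·,·⟩,A) is Jacobi–Tsankov. Then A = 0. -/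
noncomputable section

/-!
The Jacobi operators of a Jacobi–Tsankov tensor are square-zero: polarize the identity
`J(p) J(x) p = 0`. They are also self-adjoint, so positive definiteness forces `J(x) = 0`,
and a curvature tensor all of whose Jacobi operators vanish is zero.
-/

section

variable {V : Type*} [AddCommGroup V] [Module ℝ V]

@[simp]
lemma jacobiOp_apply (Aop : V →ₗ[ℝ] V →ₗ[ℝ] V →ₗ[ℝ] V) (x y : V) :
    jacobiOp Aop x y = Aop y x x :=
  rfl

structure IsAlgCurvatureTensor (B : LinearMap.BilinForm ℝ V)
    (Aop : V →ₗ[ℝ] V →ₗ[ℝ] V →ₗ[ℝ] V) : Prop where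
  antisymm : ∀ x y z w : V, B (Aop x y z) w = - B (Aop y x z) w
  pair_symm : ∀ x y z w : V, B (Aop x y z) w = B (Aop z w x) y
  bianchi : ∀ x y z w : V, B (Aop x y z) w + B (Aop y z x) w + B (Aop z x y) w = 0

namespace IsAlgCurvatureTensor

variable {B : LinearMap.BilinForm ℝ V} {Aop : V →ₗ[ℝ] V →ₗ[ℝ] V →ₗ[ℝ] V}

lemma antisymm_right (hA : IsAlgCurvatureTensor B Aop) (x y z w : V) :
    B (Aop x y z) w = - B (Aop x y w) z := by
  rw [hA.pair_symm x y z w, hA.antisymm z w x y, hA.pair_symm w z x y]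

lemma apply_self (hA : IsAlgCurvatureTensor B Aop) (hB : ∀ x : V, (∀ y : V, B x y = 0) → x = 0)
    (x : V) : Aop x x = 0 := by
  ext z
  refine hB _ fun w => ?_
  linarith [hA.antisymm x x z w]

lemma jacobiOp_symm (hA : IsAlgCurvatureTensor B Aop) (x y w : V) :
    B (jacobiOp Aop x y) w = B (jacobiOp Aop x w) y := by
  simp only [jacobiOp_apply]
  linarith [hA.antisymm_right y x x w, hA.pair_symm y x w x, hA.antisymm_right w x x y]

/-- A curvature tensor is recovered from its Jacobi operators: polarizing `𝒜(y,x)x = 0` makes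
`A` skew in its first three slots, and then the Bianchi identity reads `3 A = 0`. -/
lemma eq_zero_of_jacobiOp_eq_zero (hA : IsAlgCurvatureTensor B Aop)
    (hJ : ∀ x, jacobiOp Aop x = 0) (x y z w : V) : B (Aop x y z) w = 0 := by
  have hJ' : ∀ x y : V, Aop y x x = 0 := fun x y => LinearMap.congr_fun (hJ x) y
  have skew : ∀ x y z : V, B (Aop y x z) w = - B (Aop y z x) w := by
    intro x y z
    have h := congrArg (fun v => B v w) (hJ' (x + z) y)
    simp only [map_add, LinearMap.add_apply, hJ', zero_add, add_zero, map_zero,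
      LinearMap.zero_apply] at h
    linarith
  linarith [hA.bianchi x y z w, hA.antisymm x y z w, hA.antisymm z y x w, skew x y z, skew x z y]

end IsAlgCurvatureTensor

/-- Commutation gives the cubic identity `J(p) J(x) p = J(x) J(p) p = 0`; averaging it over
`p = y ± x` leaves `J(y) J(x) y + J(x)² y = 0`, whose first term vanishes in the same way. -/
lemma jacobiOp_comp_self_eq_zero {Aop : V →ₗ[ℝ] V →ₗ[ℝ] V →ₗ[ℝ] V}
    (hdiag : ∀ x : V, Aop x x x = 0)
    (hJT : ∀ x y : V, jacobiOp Aop x ∘ₗ jacobiOp Aop y = jacobiOp Aop y ∘ₗ jacobiOp Aop x)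
    (x : V) : jacobiOp Aop x ∘ₗ jacobiOp Aop x = 0 := by
  have hcomm : ∀ x y z : V, Aop (Aop z y y) x x = Aop (Aop z x x) y y := fun x y z =>
    LinearMap.congr_fun (hJT x y) z
  have hcubic : ∀ p : V, Aop (Aop p x x) p p = 0 := fun p => by
    rw [hcomm, hdiag, map_zero, LinearMap.zero_apply, LinearMap.zero_apply]
  ext y
  have hmixed : Aop (Aop y x x) y y = 0 := by
    rw [← hcomm, hdiag, map_zero, LinearMap.zero_apply, LinearMap.zero_apply]
  have hplus := hcubic (y + x)
  have hminus := hcubic (y - x)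
  simp only [map_add, map_sub, LinearMap.add_apply, LinearMap.sub_apply, hdiag, hmixed, add_zero,
    sub_zero, zero_add, zero_sub] at hplus hminus
  simp only [LinearMap.comp_apply, jacobiOp_apply, LinearMap.zero_apply]
  linear_combination (norm := module) (1 / 2 : ℝ) • hplus + (1 / 2 : ℝ) • hminus

lemma LinearMap.eq_zero_of_comp_self_eq_zero_of_posDef {B : LinearMap.BilinForm ℝ V}
    (hBpos : ∀ x : V, x ≠ 0 → 0 < B x x) {T : V →ₗ[ℝ] V}
    (hT : ∀ y w : V, B (T y) w = B (T w) y) (hT2 : T ∘ₗ T = 0) : T = 0 := by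
  ext y
  by_contra hy
  have hnorm : B (T y) (T y) = 0 := by
    rw [hT, ← LinearMap.comp_apply T T, hT2, LinearMap.zero_apply, map_zero, LinearMap.zero_apply]
  exact (hBpos _ hy).ne' hnorm

end

theorem jacobiTsankov_riemannian_flat_general
    {V : Type*} [AddCommGroup V] [Module ℝ V]
    -- a nondegenerate symmetric bilinear form ⟨·,·⟩ on V
    (B : LinearMap.BilinForm ℝ V)
    (hBnd : ∀ x : V, (∀ y : V, B x y = 0) → x = 0)
    -- the curvature operator 𝒜, with `A x y z w = ⟨𝒜(x,y)z, w⟩`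
    (Aop : V →ₗ[ℝ] V →ₗ[ℝ] V →ₗ[ℝ] V)
    -- A(x,y,z,w) = -A(y,x,z,w)
    (hA1 : ∀ x y z w : V, B (Aop x y z) w = - B (Aop y x z) w)
    -- A(x,y,z,w) = A(z,w,x,y)
    (hA2 : ∀ x y z w : V, B (Aop x y z) w = B (Aop z w x) y)
    -- first Bianchi identity
    (hA3 : ∀ x y z w : V, B (Aop x y z) w + B (Aop y z x) w + B (Aop z x y) w = 0)
    -- ⟨·,·⟩ is positive definite
    (hBpos : ∀ x : V, x ≠ 0 → 0 < B x x)
    -- 𝔐 is Jacobi–Tsankov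
    (hJT : ∀ x y : V, jacobiOp Aop x ∘ₗ jacobiOp Aop y = jacobiOp Aop y ∘ₗ jacobiOp Aop x) :
    ∀ x y z w : V, B (Aop x y z) w = 0 := by
  have hA : IsAlgCurvatureTensor B Aop := ⟨hA1, hA2, hA3⟩
  have hdiag : ∀ x : V, Aop x x x = 0 := fun x => by rw [hA.apply_self hBnd, LinearMap.zero_apply]
  refine hA.eq_zero_of_jacobiOp_eq_zero fun x => ?_
  exact LinearMap.eq_zero_of_comp_self_eq_zero_of_posDef hBpos (hA.jacobiOp_symm x)
    (jacobiOp_comp_self_eq_zero hdiag hJT x)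

/-- If `⟨·,·⟩` is positive definite and `𝔐 = (V,⟨·,·⟩,A)` is
Jacobi–Tsankov, then `A = 0`. -/
theorem jacobiTsankov_riemannian_flat
    {V : Type*} [AddCommGroup V] [Module ℝ V] [FiniteDimensional ℝ V]
    -- a nondegenerate symmetric bilinear form ⟨·,·⟩ on V
    (B : LinearMap.BilinForm ℝ V)
    (hBsymm : ∀ x y : V, B x y = B y x)
    (hBnd : ∀ x : V, (∀ y : V, B x y = 0) → x = 0)
    -- the curvature operator 𝒜, with `A x y z w = ⟨𝒜(x,y)z, w⟩`
    (Aop : V →ₗ[ℝ] V →ₗ[ℝ] V →ₗ[ℝ] V)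
    -- A(x,y,z,w) = -A(y,x,z,w)
    (hA1 : ∀ x y z w : V, B (Aop x y z) w = - B (Aop y x z) w)
    -- A(x,y,z,w) = A(z,w,x,y)
    (hA2 : ∀ x y z w : V, B (Aop x y z) w = B (Aop z w x) y)
    -- first Bianchi identity
    (hA3 : ∀ x y z w : V, B (Aop x y z) w + B (Aop y z x) w + B (Aop z x y) w = 0)
    -- ⟨·,·⟩ is positive definite
    (hBpos : ∀ x : V, x ≠ 0 → 0 < B x x)
    -- 𝔐 is Jacobi–Tsankov
    (hJT : ∀ x y : V, jacobiOp Aop x ∘ₗ jacobiOp Aop y = jacobiOp Aop y ∘ₗ jacobiOp Aop x) :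
    ∀ x y z w : V, B (Aop x y z) w = 0 :=
  jacobiTsankov_riemannian_flat_general B hBnd Aop hA1 hA2 hA3 hBpos hJT
end
end

section
/- Let ⟨·,·⟩ be a nondegenerate symmetric bilinear form of Lorentzian signature (1,q) on the finite-dimensional real vector space V (that is, V admits an orthogonal basis in which exactly one basis vector has negative square norm and the remaining q have positive square norm), and let A be an algebraic curvature tensor on (V,⟨·,·⟩) such that 𝔐 = (V,⟨·,·⟩,A) is Jacobi–Tsankov. Then A = 0. -/
noncomputable section

/-- Positive definiteness of a Lorentzian form on the orthogonal complement of a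
timelike vector, in coordinates. -/
lemma aux_lorentz {n : ℕ} (d u v : Fin (n + 1) → ℝ)
    (hd0 : d 0 < 0) (hdi : ∀ i : Fin (n + 1), i ≠ 0 → 0 < d i)
    (huu : ∑ i, u i * u i * d i < 0)
    (huv : ∑ i, u i * v i * d i = 0)
    (hvv : ∑ i, v i * v i * d i = 0) : ∀ i, v i = 0 := by
  classical
  set s : Finset (Fin (n + 1)) := Finset.univ.erase 0 with hs
  have hsplit : ∀ f : Fin (n + 1) → ℝ, ∑ i, f i = f 0 + ∑ i ∈ s, f i := by
    intro f
    rw [hs, ← Finset.sum_erase_add Finset.univ f (Finset.mem_univ 0)]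
    ring
  have hdnn : ∀ i ∈ s, 0 ≤ d i := fun i hi =>
    (hdi i (Finset.ne_of_mem_erase hi)).le
  -- Cauchy–Schwarz
  have hcs : (∑ i ∈ s, u i * v i * d i) ^ 2 ≤
      (∑ i ∈ s, u i * u i * d i) * (∑ i ∈ s, v i * v i * d i) := by
    have h := Finset.sum_mul_sq_le_sq_mul_sq s
      (fun i => Real.sqrt (d i) * u i) (fun i => Real.sqrt (d i) * v i)
    have e1 : ∑ i ∈ s, (Real.sqrt (d i) * u i) * (Real.sqrt (d i) * v i)
        = ∑ i ∈ s, u i * v i * d i := by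
      apply Finset.sum_congr rfl
      intro i hi
      have : Real.sqrt (d i) * Real.sqrt (d i) = d i := Real.mul_self_sqrt (hdnn i hi)
      linear_combination (u i * v i) * this
    have e2 : ∑ i ∈ s, (Real.sqrt (d i) * u i) ^ 2 = ∑ i ∈ s, u i * u i * d i := by
      apply Finset.sum_congr rfl
      intro i hi
      have : Real.sqrt (d i) * Real.sqrt (d i) = d i := Real.mul_self_sqrt (hdnn i hi)
      linear_combination (u i * u i) * this
    have e3 : ∑ i ∈ s, (Real.sqrt (d i) * v i) ^ 2 = ∑ i ∈ s, v i * v i * d i := by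
      apply Finset.sum_congr rfl
      intro i hi
      have : Real.sqrt (d i) * Real.sqrt (d i) = d i := Real.mul_self_sqrt (hdnn i hi)
      linear_combination (v i * v i) * this
    rw [e1, e2, e3] at h
    exact h
  have hSuu : ∑ i ∈ s, u i * u i * d i < -(d 0) * (u 0 * u 0) := by
    have := hsplit (fun i => u i * u i * d i)
    nlinarith [this]
  have hSuunn : 0 ≤ ∑ i ∈ s, u i * u i * d i :=
    Finset.sum_nonneg fun i hi => by nlinarith [hdnn i hi, sq_nonneg (u i)]
  have hSvv : ∑ i ∈ s, v i * v i * d i = -(d 0) * (v 0 * v 0) := by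
    have := hsplit (fun i => v i * v i * d i)
    nlinarith [this]
  have hSuv : ∑ i ∈ s, u i * v i * d i = -(d 0) * (u 0 * v 0) := by
    have := hsplit (fun i => u i * v i * d i)
    nlinarith [this]
  have hu0 : 0 < -(d 0) * (u 0 * u 0) := lt_of_le_of_lt hSuunn hSuu
  have hv0 : v 0 = 0 := by
    by_contra hne
    have hv0sq : 0 < v 0 * v 0 := mul_self_pos.mpr hne
    rw [hSuv, hSvv] at hcs
    have hkey := mul_lt_mul_of_pos_right hSuu (show (0:ℝ) < -(d 0) * (v 0 * v 0) by nlinarith)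
    nlinarith [hcs, hkey]
  have hSvv0 : ∑ i ∈ s, v i * v i * d i = 0 := by rw [hSvv, hv0]; ring
  have hall : ∀ i ∈ s, v i * v i * d i = 0 := by
    rw [← Finset.sum_eq_zero_iff_of_nonneg
      (fun i hi => by nlinarith [hdnn i hi, sq_nonneg (v i)])]
    exact hSvv0
  intro i
  by_cases hi : i = 0
  · rw [hi]; exact hv0
  · have hmem : i ∈ s := Finset.mem_erase.mpr ⟨hi, Finset.mem_univ i⟩
    have h0 := hall i hmem
    have hdipos := hdi i hi
    exact mul_self_eq_zero.mp ((mul_eq_zero.mp h0).resolve_right (ne_of_gt hdipos))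

lemma aux_small (a p g : ℝ) (ha : a < 0) :
    ∃ ε : ℝ, 0 < ε ∧ a + 2 * ε * p + ε ^ 2 * g < 0 ∧ a + 2 * (-ε) * p + (-ε) ^ 2 * g < 0 := by
  refine ⟨min 1 ((-a) / (2 * |p| + |g| + 1)) / 2, ?_, ?_, ?_⟩
  · have hM : 0 < 2 * |p| + |g| + 1 := by positivity
    have : 0 < min 1 ((-a) / (2 * |p| + |g| + 1)) :=
      lt_min one_pos (div_pos (by linarith) hM)
    linarith
  all_goals {
    have hM : 0 < 2 * |p| + |g| + 1 := by positivity
    set ε := min 1 ((-a) / (2 * |p| + |g| + 1)) / 2 with hε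
    have hεpos : 0 < ε := by
      have : 0 < min 1 ((-a) / (2 * |p| + |g| + 1)) :=
        lt_min one_pos (div_pos (by linarith) hM)
      rw [hε]; linarith
    have hε1 : ε ≤ 1 := by
      rw [hε]
      have := min_le_left 1 ((-a) / (2 * |p| + |g| + 1))
      linarith
    have hεM : ε * (2 * |p| + |g| + 1) < -a := by
      have h := min_le_right 1 ((-a) / (2 * |p| + |g| + 1))
      have hle : ε ≤ (-a) / (2 * |p| + |g| + 1) / 2 := by rw [hε]; linarith
      have h2 : ε * (2 * |p| + |g| + 1) ≤ (-a) / (2 * |p| + |g| + 1) / 2 * (2 * |p| + |g| + 1) := by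
        nlinarith
      have h3 : (-a) / (2 * |p| + |g| + 1) / 2 * (2 * |p| + |g| + 1) = (-a) / 2 := by
        field_simp
      linarith
    have hsq : ε ^ 2 ≤ ε := by nlinarith
    have hb1 := le_abs_self p
    have hb2 := neg_abs_le p
    have hg1 := le_abs_self g
    have hg2 := neg_abs_le g
    nlinarith [mul_le_mul_of_nonneg_right hsq (abs_nonneg g), hεpos,
      mul_le_mul_of_nonneg_left hb1 (le_of_lt hεpos),
      mul_le_mul_of_nonneg_left hb2 (le_of_lt hεpos),
      mul_le_mul_of_nonneg_left hg1 (sq_nonneg ε),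
      mul_le_mul_of_nonneg_left hg2 (sq_nonneg ε)]
  }

/-- If `⟨·,·⟩` has Lorentzian signature `(1,q)` (there is an orthogonal
basis in which exactly one vector has negative square norm and the remaining `q` have
positive square norm) and `𝔐 = (V,⟨·,·⟩,A)` is Jacobi–Tsankov, then `A = 0`. -/
theorem jacobiTsankov_lorentzian_flat
    {V : Type*} [AddCommGroup V] [Module ℝ V] [FiniteDimensional ℝ V]
    -- a nondegenerate symmetric bilinear form ⟨·,·⟩ on V
    (B : LinearMap.BilinForm ℝ V)
    (hBsymm : ∀ x y : V, B x y = B y x)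
    (hBnd : ∀ x : V, (∀ y : V, B x y = 0) → x = 0)
    -- the curvature operator 𝒜, with `A x y z w = ⟨𝒜(x,y)z, w⟩`
    (Aop : V →ₗ[ℝ] V →ₗ[ℝ] V →ₗ[ℝ] V)
    -- A(x,y,z,w) = -A(y,x,z,w)
    (hA1 : ∀ x y z w : V, B (Aop x y z) w = - B (Aop y x z) w)
    -- A(x,y,z,w) = A(z,w,x,y)
    (hA2 : ∀ x y z w : V, B (Aop x y z) w = B (Aop z w x) y)
    -- first Bianchi identity
    (hA3 : ∀ x y z w : V, B (Aop x y z) w + B (Aop y z x) w + B (Aop z x y) w = 0)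
    -- ⟨·,·⟩ has Lorentzian signature (1,q)
    (hLor : ∃ (q : ℕ) (b : Module.Basis (Fin (q + 1)) ℝ V),
      (∀ i j : Fin (q + 1), i ≠ j → B (b i) (b j) = 0) ∧
      B (b 0) (b 0) < 0 ∧ ∀ i : Fin (q + 1), i ≠ 0 → 0 < B (b i) (b i))
    -- 𝔐 is Jacobi–Tsankov
    (hJT : ∀ x y : V, jacobiOp Aop x ∘ₗ jacobiOp Aop y = jacobiOp Aop y ∘ₗ jacobiOp Aop x) :
    ∀ x y z w : V, B (Aop x y z) w = 0 := by
  classical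
  -- antisymmetry in the last two slots
  have s34 : ∀ a b c e : V, B (Aop a b c) e = - B (Aop a b e) c := by
    intro a b c e
    rw [hA2 a b c e, hA1 c e a b, ← hA2 a b e c]
  -- vector-level facts using nondegeneracy
  have hAxxV : ∀ x z : V, Aop x x z = 0 := by
    intro x z
    apply hBnd
    intro w
    have := hA1 x x z w
    linarith
  have a1v : ∀ x y z : V, Aop y x z = - Aop x y z := by
    intro x y z
    have h : Aop y x z + Aop x y z = 0 := by
      apply hBnd
      intro w
      have h1 := hA1 x y z w
      simp only [map_add, LinearMap.add_apply]
      linarith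
    exact eq_neg_of_add_eq_zero_left h
  -- the Jacobi–Tsankov condition, pointwise
  have comm : ∀ u v w z : V, B (Aop (Aop w v v) u u) z = B (Aop (Aop w u u) v v) z := by
    intro u v w z
    have h := LinearMap.congr_fun (hJT u v) w
    simp only [jacobiOp, LinearMap.comp_apply, LinearMap.coe_mk, AddHom.coe_mk] at h
    rw [h]
  -- polarized commutation identity
  have star : ∀ w x y z : V,
      B (Aop (Aop w x y) x x) z + B (Aop (Aop w y x) x x) z
        = B (Aop (Aop w x x) x y) z + B (Aop (Aop w x x) y x) z := by
    intro w x y z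
    have h1 := comm x (x + y) w z
    have h2 := comm x y w z
    simp only [map_add, LinearMap.add_apply] at h1
    linarith
  -- each Jacobi operator squares to zero
  have Jsq : ∀ x y z : V, B (Aop (Aop y x x) x x) z = 0 := by
    intro x y z
    have h := star x x y z
    rw [hAxxV x y, hAxxV x x, a1v y x x] at h
    simp only [map_zero, LinearMap.zero_apply, map_neg, LinearMap.neg_apply] at h
    linarith
  -- the Jacobi operator is self-adjoint
  have sa : ∀ x y z : V, B (Aop y x x) z = B (Aop z x x) y := by
    intro x y z
    rw [hA2 y x x z, hA1 x z y x, s34 z x y x, neg_neg]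
  have orthJ : ∀ u y : V, B (Aop y u u) u = 0 := by
    intro u y
    have := s34 y u u u
    linarith
  obtain ⟨q, b, horth, hneg, hpos⟩ := hLor
  have Bcoord : ∀ u v : V,
      B u v = ∑ i, b.repr u i * b.repr v i * B (b i) (b i) := by
    intro u v
    conv_lhs => rw [← b.sum_repr u, ← b.sum_repr v]
    simp only [map_sum, map_smul, LinearMap.sum_apply, LinearMap.smul_apply, smul_eq_mul,
      Finset.mul_sum]
    apply Finset.sum_congr rfl
    intro i _
    rw [Finset.sum_eq_single i]
    · ring
    · intro j _ hj
      rw [horth j i hj]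
      ring
    · intro hi
      exact absurd (Finset.mem_univ i) hi
  -- the Jacobi operator of a timelike vector vanishes
  have Jtime : ∀ u : V, B u u < 0 → ∀ y z : V, B (Aop y u u) z = 0 := by
    intro u hu y z
    have hvv : B (Aop y u u) (Aop y u u) = 0 := by
      rw [sa u y (Aop y u u)]
      exact Jsq u y y
    have huv : B u (Aop y u u) = 0 := by
      rw [hBsymm]
      exact orthJ u y
    have h1 : ∑ i, b.repr u i * b.repr u i * B (b i) (b i) < 0 := by
      rw [← Bcoord]; exact hu
    have h2 : ∑ i, b.repr u i * b.repr (Aop y u u) i * B (b i) (b i) = 0 := by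
      rw [← Bcoord]; exact huv
    have h3 : ∑ i, b.repr (Aop y u u) i * b.repr (Aop y u u) i * B (b i) (b i) = 0 := by
      rw [← Bcoord]; exact hvv
    have hz := aux_lorentz (fun i => B (b i) (b i)) (fun i => b.repr u i)
      (fun i => b.repr (Aop y u u) i) hneg hpos h1 h2 h3
    rw [hBsymm, Bcoord]
    apply Finset.sum_eq_zero
    intro i _
    have := hz i
    rw [this]
    ring
  -- every Jacobi operator vanishes
  have Jall : ∀ y w z : V, B (Aop w y y) z = 0 := by
    intro y w z
    have hx0 : B (b 0) (b 0) < 0 := hneg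
    obtain ⟨ε, hεpos, hp, hm⟩ := aux_small (B (b 0) (b 0)) (B (b 0) y) (B y y) hx0
    have key : ∀ t : ℝ, B (b 0) (b 0) + 2 * t * B (b 0) y + t ^ 2 * B y y < 0 →
        B (Aop w (b 0 + t • y) (b 0 + t • y)) z = 0 := by
      intro t ht
      apply Jtime
      have hexp : B (b 0 + t • y) (b 0 + t • y)
          = B (b 0) (b 0) + 2 * t * B (b 0) y + t ^ 2 * B y y := by
        simp only [map_add, map_smul, LinearMap.add_apply, LinearMap.smul_apply, smul_eq_mul]
        rw [hBsymm y (b 0)]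
        ring
      rw [hexp]
      exact ht
    have e1 := key ε hp
    have e2 := key (-ε) hm
    have e0 := Jtime (b 0) hx0 w z
    simp only [map_add, map_smul, LinearMap.add_apply, LinearMap.smul_apply, smul_eq_mul] at e1 e2
    have hsum : (2 * ε ^ 2) * B (Aop w y y) z = (2 * ε ^ 2) * 0 := by
      linear_combination e1 + e2 - 2 * e0
    exact mul_left_cancel₀ (by positivity) hsum
  -- antisymmetry in the middle two slots
  have mid : ∀ x y z w : V, B (Aop x y z) w = - B (Aop x z y) w := by
    intro x y z w
    have h := Jall (y + z) x w
    simp only [map_add, LinearMap.add_apply] at h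
    have hy := Jall y x w
    have hz := Jall z x w
    linarith
  intro x y z w
  have h3 := hA3 x y z w
  have m1 : B (Aop y z x) w = B (Aop x y z) w := (mid y z x w).trans (hA1 x y z w).symm
  have m2 : B (Aop z x y) w = B (Aop y z x) w := by
    rw [mid z x y w, hA1 z y x w, neg_neg]
  linarith
end
end

section
/- Let 𝔐 = (V,⟨·,·⟩,A) be Jacobi–Tsankov. Then the polarized Jacobi operators commute pairwise: J(x₁,x₂)∘J(y₁,y₂) = J(y₁,y₂)∘J(x₁,x₂) for all x₁, x₂, y₁, y₂ ∈ V. -/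
/-! `J(x,y)` is the polarization `½ (J(x+y) - J(x) - J(y))` of the quadratic map `x ↦ J(x)`,
so it lies in the span of Jacobi operators; operators in the span of a pairwise commuting
family commute. -/

noncomputable section

theorem Commute.polarization {R V : Type*} [Ring R] [Add V] {f : V → R}
    (hf : ∀ a b, Commute (f a) (f b)) (a b c d : V) :
    Commute (f (a + b) - f a - f b) (f (c + d) - f c - f d) := by
  have hleft : ∀ u, Commute (f (a + b) - f a - f b) (f u) := fun u =>
    ((hf _ u).sub_left (hf _ u)).sub_left (hf _ u)
  exact ((hleft _).sub_right (hleft _)).sub_right (hleft _)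

theorem jacobiPol_eq_half_smul {V : Type*} [AddCommGroup V] [Module ℝ V]
    (Aop : V →ₗ[ℝ] V →ₗ[ℝ] V →ₗ[ℝ] V) (x y : V) :
    jacobiPol Aop x y = (1/2 : ℝ) • (jacobiOp Aop (x + y) - jacobiOp Aop x - jacobiOp Aop y) := by
  ext z
  simp only [jacobiPol, jacobiOp, LinearMap.coe_mk, AddHom.coe_mk, LinearMap.smul_apply,
    LinearMap.sub_apply, map_add, LinearMap.add_apply]
  congr 1
  abel

theorem jacobiTsankov_polarized_commute_general
    {V : Type*} [AddCommGroup V] [Module ℝ V]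
    -- the curvature operator 𝒜, with `A x y z w = ⟨𝒜(x,y)z, w⟩`
    (Aop : V →ₗ[ℝ] V →ₗ[ℝ] V →ₗ[ℝ] V)
    -- 𝔐 is Jacobi–Tsankov
    (hJT : ∀ x y : V, jacobiOp Aop x ∘ₗ jacobiOp Aop y = jacobiOp Aop y ∘ₗ jacobiOp Aop x) :
    ∀ x₁ x₂ y₁ y₂ : V,
      jacobiPol Aop x₁ x₂ ∘ₗ jacobiPol Aop y₁ y₂ = jacobiPol Aop y₁ y₂ ∘ₗ jacobiPol Aop x₁ x₂ := by
  intro x₁ x₂ y₁ y₂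
  rw [jacobiPol_eq_half_smul, jacobiPol_eq_half_smul]
  exact (((Commute.polarization hJT x₁ x₂ y₁ y₂).smul_left _).smul_right _).eq

/-- If `𝔐 = (V,⟨·,·⟩,A)` is Jacobi–Tsankov, then the polarized Jacobi
operators commute pairwise. -/
theorem jacobiTsankov_polarized_commute
    {V : Type*} [AddCommGroup V] [Module ℝ V] [FiniteDimensional ℝ V]
    -- a nondegenerate symmetric bilinear form ⟨·,·⟩ on V
    (B : LinearMap.BilinForm ℝ V)
    (hBsymm : ∀ x y : V, B x y = B y x)
    (hBnd : ∀ x : V, (∀ y : V, B x y = 0) → x = 0)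
    -- the curvature operator 𝒜, with `A x y z w = ⟨𝒜(x,y)z, w⟩`
    (Aop : V →ₗ[ℝ] V →ₗ[ℝ] V →ₗ[ℝ] V)
    -- A(x,y,z,w) = -A(y,x,z,w)
    (hA1 : ∀ x y z w : V, B (Aop x y z) w = - B (Aop y x z) w)
    -- A(x,y,z,w) = A(z,w,x,y)
    (hA2 : ∀ x y z w : V, B (Aop x y z) w = B (Aop z w x) y)
    -- first Bianchi identity
    (hA3 : ∀ x y z w : V, B (Aop x y z) w + B (Aop y z x) w + B (Aop z x y) w = 0)
    -- 𝔐 is Jacobi–Tsankov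
    (hJT : ∀ x y : V, jacobiOp Aop x ∘ₗ jacobiOp Aop y = jacobiOp Aop y ∘ₗ jacobiOp Aop x) :
    ∀ x₁ x₂ y₁ y₂ : V,
      jacobiPol Aop x₁ x₂ ∘ₗ jacobiPol Aop y₁ y₂ = jacobiPol Aop y₁ y₂ ∘ₗ jacobiPol Aop x₁ x₂ :=
  jacobiTsankov_polarized_commute_general Aop hJT
end
end

section
/- Let 𝔐 = (V,⟨·,·⟩,A) be Jacobi–Tsankov. Then for all x, y ∈ V one has J(x)∘J(x,y) = 0, J(x,y)∘J(x) = 0, and J(x,y)∘J(x,y) = −(1/2)·J(x)∘J(y). -/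
noncomputable section

/-!
The Jacobi–Tsankov condition says that `J(x)` commutes with every `J(x + c y)`, hence with
`J(x,y)`. Evaluating `J(x) J(x,w) = J(x,w) J(x)` at `x`, where `J(x) x = 0` and
`J(x,w) x = -½ J(x) w` by skew-symmetry, gives `J(x)² = 0` for every `x`. Applying this to
`x + c y` yields a polynomial identity in `c`; its coefficients of `c` and `c²` are
`4 J(x) J(x,y)` and `4 J(x,y)² + 2 J(x) J(y)`.
-/

theorem eq_zero_of_forall_smul_add_sq_smul_add_cube_smul_eq_zero
    {K M : Type*} [Field K] [CharZero K] [AddCommGroup M] [Module K M] {q r s : M}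
    (h : ∀ c : K, c • q + c ^ 2 • r + c ^ 3 • s = 0) : q = 0 ∧ r = 0 ∧ s = 0 := by
  have h₁ := h 1
  have hneg := h (-1)
  have h₂ := h 2
  have hr : (2 : K) • r = 0 := by linear_combination (norm := module) h₁ + hneg
  have hs : (6 : K) • s = 0 := by linear_combination (norm := module) h₂ - (2 : K) • h₁ - hr
  rw [smul_eq_zero_iff_right two_ne_zero] at hr
  rw [smul_eq_zero_iff_right (by norm_num)] at hs
  refine ⟨?_, hr, hs⟩
  linear_combination (norm := module) h₁ - hr - hs

theorem mul_eq_zero_and_mul_self_eq_of_forall_sq_eq_zero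
    {K A : Type*} [Field K] [CharZero K] [Ring A] [Algebra K A] {a p b : A}
    (ha : a * a = 0) (hb : b * b = 0) (hap : Commute a p) (hab : Commute a b)
    (h : ∀ c : K, (a + (2 * c) • p + c ^ 2 • b) * (a + (2 * c) • p + c ^ 2 • b) = 0) :
    a * p = 0 ∧ p * p = -(1 / 2 : K) • (a * b) := by
  have hpoly : ∀ c : K, c • ((4 : K) • (a * p)) + c ^ 2 • ((4 : K) • (p * p) + (2 : K) • (a * b))
      + c ^ 3 • ((2 : K) • (p * b + b * p)) = 0 := by
    intro c
    have hc := h c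
    simp only [add_mul, mul_add, smul_mul_assoc, mul_smul_comm, ha, hb,
      hap.eq, hab.eq] at hc ⊢
    linear_combination (norm := module) hc
  obtain ⟨hq, hr, -⟩ := eq_zero_of_forall_smul_add_sq_smul_add_cube_smul_eq_zero (K := K) hpoly
  refine ⟨(smul_eq_zero_iff_right (by norm_num)).mp hq, ?_⟩
  linear_combination (norm := module) (1 / 4 : K) • hr

theorem apply_swap_eq_neg_of_nondegenerate {R V : Type*} [CommRing R] [AddCommGroup V]
    [Module R V] {B : LinearMap.BilinForm R V} (hB : ∀ x : V, (∀ y : V, B x y = 0) → x = 0)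
    {Aop : V →ₗ[R] V →ₗ[R] V →ₗ[R] V} (hA : ∀ x y z w : V, B (Aop x y z) w = -B (Aop y x z) w)
    (x y z : V) : Aop x y z = -Aop y x z :=
  eq_neg_of_add_eq_zero_left <| hB _ fun w => by simp [hA x y z w]

section JacobiOperators

variable {V : Type*} [AddCommGroup V] [Module ℝ V] {Aop : V →ₗ[ℝ] V →ₗ[ℝ] V →ₗ[ℝ] V}

theorem jacobiOp_add_smul (x y : V) (c : ℝ) :
    jacobiOp Aop (x + c • y) = jacobiOp Aop x + (2 * c) • jacobiPol Aop x y
      + c ^ 2 • jacobiOp Aop y := by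
  ext z
  simp only [jacobiOp, jacobiPol, LinearMap.coe_mk, AddHom.coe_mk, LinearMap.add_apply,
    LinearMap.smul_apply, map_add, map_smul]
  module

theorem commute_jacobiOp_jacobiPol (hJT : ∀ x y : V, Commute (jacobiOp Aop x) (jacobiOp Aop y))
    (x y : V) : Commute (jacobiOp Aop x) (jacobiPol Aop x y) := by
  have hpol : jacobiPol Aop x y
      = (1 / 2 : ℝ) • (jacobiOp Aop (x + y) - jacobiOp Aop x - jacobiOp Aop y) := by
    have h := jacobiOp_add_smul (Aop := Aop) x y 1
    rw [one_smul] at h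
    rw [h]
    module
  rw [hpol]
  exact (((hJT x (x + y)).sub_right (Commute.refl _)).sub_right (hJT x y)).smul_right _

section Skew

variable (hskew : ∀ x y z : V, Aop x y z = -Aop y x z)
include hskew

theorem jacobiOp_apply_self (x : V) : jacobiOp Aop x x = 0 := by
  show Aop x x x = 0
  linear_combination (norm := module) (1 / 2 : ℝ) • hskew x x x

theorem jacobiPol_apply_self (x y : V) :
    jacobiPol Aop x y x = -(1 / 2 : ℝ) • jacobiOp Aop x y := by
  show (1 / 2 : ℝ) • (Aop x x y + Aop x y x) = -(1 / 2 : ℝ) • Aop y x x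
  linear_combination (norm := module) (1 / 4 : ℝ) • hskew x x y + (1 / 2 : ℝ) • hskew x y x

theorem jacobiOp_mul_self (hJT : ∀ x y : V, Commute (jacobiOp Aop x) (jacobiOp Aop y)) (x : V) :
    jacobiOp Aop x * jacobiOp Aop x = 0 := by
  ext w
  have h := LinearMap.congr_fun (commute_jacobiOp_jacobiPol hJT x w).eq x
  rw [Module.End.mul_apply, Module.End.mul_apply, jacobiPol_apply_self hskew,
    jacobiOp_apply_self hskew, map_smul, map_zero, smul_eq_zero_iff_right (by norm_num)] at h
  exact h

end Skew

end JacobiOperators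

theorem jacobiTsankov_polarized_relations_general
    {V : Type*} [AddCommGroup V] [Module ℝ V]
    -- a nondegenerate symmetric bilinear form ⟨·,·⟩ on V
    (B : LinearMap.BilinForm ℝ V)
    (hBnd : ∀ x : V, (∀ y : V, B x y = 0) → x = 0)
    -- the curvature operator 𝒜, with `A x y z w = ⟨𝒜(x,y)z, w⟩`
    (Aop : V →ₗ[ℝ] V →ₗ[ℝ] V →ₗ[ℝ] V)
    -- A(x,y,z,w) = -A(y,x,z,w)
    (hA1 : ∀ x y z w : V, B (Aop x y z) w = - B (Aop y x z) w)
    -- 𝔐 is Jacobi–Tsankov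
    (hJT : ∀ x y : V, jacobiOp Aop x ∘ₗ jacobiOp Aop y = jacobiOp Aop y ∘ₗ jacobiOp Aop x) :
    ∀ x y : V,
      jacobiOp Aop x ∘ₗ jacobiPol Aop x y = 0 ∧
      jacobiPol Aop x y ∘ₗ jacobiOp Aop x = 0 ∧
      jacobiPol Aop x y ∘ₗ jacobiPol Aop x y = -(1/2 : ℝ) • (jacobiOp Aop x ∘ₗ jacobiOp Aop y) := by
  intro x y
  have hskew := apply_swap_eq_neg_of_nondegenerate hBnd hA1
  have hJT' : ∀ x y : V, Commute (jacobiOp Aop x) (jacobiOp Aop y) := hJT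
  have hcomm := commute_jacobiOp_jacobiPol hJT' x y
  obtain ⟨hleft, hsq⟩ := mul_eq_zero_and_mul_self_eq_of_forall_sq_eq_zero (K := ℝ)
    (jacobiOp_mul_self hskew hJT' x) (jacobiOp_mul_self hskew hJT' y) hcomm (hJT' x y)
    fun c => by rw [← jacobiOp_add_smul]; exact jacobiOp_mul_self hskew hJT' _
  exact ⟨hleft, hcomm.eq.symm.trans hleft, hsq⟩

/-- If `𝔐 = (V,⟨·,·⟩,A)` is Jacobi–Tsankov, then for all `x, y ∈ V` one
has `J(x)∘J(x,y) = 0`, `J(x,y)∘J(x) = 0`, and `J(x,y)∘J(x,y) = -(1/2)·J(x)∘J(y)`. -/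
theorem jacobiTsankov_polarized_relations
    {V : Type*} [AddCommGroup V] [Module ℝ V] [FiniteDimensional ℝ V]
    -- a nondegenerate symmetric bilinear form ⟨·,·⟩ on V
    (B : LinearMap.BilinForm ℝ V)
    (hBsymm : ∀ x y : V, B x y = B y x)
    (hBnd : ∀ x : V, (∀ y : V, B x y = 0) → x = 0)
    -- the curvature operator 𝒜, with `A x y z w = ⟨𝒜(x,y)z, w⟩`
    (Aop : V →ₗ[ℝ] V →ₗ[ℝ] V →ₗ[ℝ] V)
    -- A(x,y,z,w) = -A(y,x,z,w)
    (hA1 : ∀ x y z w : V, B (Aop x y z) w = - B (Aop y x z) w)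
    -- A(x,y,z,w) = A(z,w,x,y)
    (hA2 : ∀ x y z w : V, B (Aop x y z) w = B (Aop z w x) y)
    -- first Bianchi identity
    (hA3 : ∀ x y z w : V, B (Aop x y z) w + B (Aop y z x) w + B (Aop z x y) w = 0)
    -- 𝔐 is Jacobi–Tsankov
    (hJT : ∀ x y : V, jacobiOp Aop x ∘ₗ jacobiOp Aop y = jacobiOp Aop y ∘ₗ jacobiOp Aop x) :
    ∀ x y : V,
      jacobiOp Aop x ∘ₗ jacobiPol Aop x y = 0 ∧
      jacobiPol Aop x y ∘ₗ jacobiOp Aop x = 0 ∧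
      jacobiPol Aop x y ∘ₗ jacobiPol Aop x y = -(1/2 : ℝ) • (jacobiOp Aop x ∘ₗ jacobiOp Aop y) :=
  jacobiTsankov_polarized_relations_general B hBnd Aop hA1 hJT
end
end

section
/- There exist endomorphisms φ₁, φ₂ of ℝ⁸, skew-adjoint with respect to the nondegenerate symmetric bilinear form of signature (4,4) given by ⟨u,v⟩ = −u₁v₁ − u₂v₂ − u₃v₃ − u₄v₄ + u₅v₅ + u₆v₆ + u₇v₇ + u₈v₈, such that φ₁∘φ₁ = 0, φ₂∘φ₂ = 0, φ₁∘φ₂ + φ₂∘φ₁ = 0, and φ₁∘φ₂ ≠ 0. -/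
/-!
Write `ℝ⁸ = ℝ² ⊗ ℝ⁴` (with `e_s ⊗ e_j = e_{4s+j}`), so that the form is `diag(-1, 1) ⊗ id`.
On `ℝ⁴` take the skew-symmetric complex structures `J = (x₁, -x₀, x₃, -x₂)`,
`K = (x₃, x₂, -x₁, -x₀)` and the symmetric involution `P = (x₁, x₀, x₃, x₂)`, with `JK = -KJ`,
`JP = -PJ` and `KP = PK`; on `ℝ²` take `X = [[0,1],[1,0]]`, `Z = diag(1,-1)`,
`W = [[0,-1],[1,0]]`. Then `1 ⊗ J`, `X ⊗ P`, `Z ⊗ K`, `W ⊗ K` are skew-adjoint and pairwise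
anticommuting, with squares `-1, 1, -1, 1`. Hence `φ₁ = 1 ⊗ J + X ⊗ P` and
`φ₂ = Z ⊗ K + W ⊗ K` square to zero and anticommute, while `φ₁φ₂ ≠ 0`. All of this is a finite
computation with integer matrices, transported to `ℝ`.
-/

noncomputable section

/-- The nondegenerate symmetric bilinear form of signature (4,4) on ℝ⁸:
`⟨u,v⟩ = -u₁v₁ - u₂v₂ - u₃v₃ - u₄v₄ + u₅v₅ + u₆v₆ + u₇v₇ + u₈v₈`. -/
def form44 (u v : Fin 8 → ℝ) : ℝ :=
  ∑ i : Fin 8, (if (i : ℕ) < 4 then (-1 : ℝ) else 1) * u i * v i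

open Matrix

section SkewAdjoint

variable {n : Type*} [Fintype n] [DecidableEq n]

theorem Matrix.IsSkewAdjoint.map {R S : Type*} [CommRing R] [CommRing S] (f : R →+* S)
    {J A : Matrix n n R} (h : J.IsSkewAdjoint A) : (J.map f).IsSkewAdjoint (A.map f) := by
  unfold Matrix.IsSkewAdjoint Matrix.IsAdjointPair at h ⊢
  simpa only [map_mul, map_neg, RingHom.mapMatrix_apply, transpose_map]
    using congrArg f.mapMatrix h

theorem Matrix.IsSkewAdjoint.toLinearMap₂'_mulVec {R : Type*} [CommRing R]
    {J A : Matrix n n R} (h : J.IsSkewAdjoint A) (x y : n → R) :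
    toLinearMap₂' R J (A *ᵥ x) y = -toLinearMap₂' R J x (A *ᵥ y) := by
  simpa [toLin'_apply, neg_mulVec] using (isAdjointPair_toLinearMap₂' J J A (-A)).2 h x y

end SkewAdjoint

def gram44 (R : Type*) [Ring R] : Matrix (Fin 8) (Fin 8) R :=
  diagonal fun i => if (i : ℕ) < 4 then -1 else 1

theorem form44_eq_toLinearMap₂' (u v : Fin 8 → ℝ) :
    form44 u v = toLinearMap₂' ℝ (gram44 ℝ) u v := by
  simp [form44, gram44, toLinearMap₂'_apply', dotProduct, mulVec_diagonal, mul_comm]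

theorem gram44_map_intCast : (gram44 ℤ).map (Int.cast : ℤ → ℝ) = gram44 ℝ := by
  simp [gram44, apply_ite]

def Φ₁ : Matrix (Fin 8) (Fin 8) ℤ :=
  !![ 0, 1, 0, 0, 0, 1, 0, 0;
     -1, 0, 0, 0, 1, 0, 0, 0;
      0, 0, 0, 1, 0, 0, 0, 1;
      0, 0,-1, 0, 0, 0, 1, 0;
      0, 1, 0, 0, 0, 1, 0, 0;
      1, 0, 0, 0,-1, 0, 0, 0;
      0, 0, 0, 1, 0, 0, 0, 1;
      0, 0, 1, 0, 0, 0,-1, 0]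

def Φ₂ : Matrix (Fin 8) (Fin 8) ℤ :=
  !![ 0, 0, 0, 1, 0, 0, 0,-1;
      0, 0, 1, 0, 0, 0,-1, 0;
      0,-1, 0, 0, 0, 1, 0, 0;
     -1, 0, 0, 0, 1, 0, 0, 0;
      0, 0, 0, 1, 0, 0, 0,-1;
      0, 0, 1, 0, 0, 0,-1, 0;
      0,-1, 0, 0, 0, 1, 0, 0;
     -1, 0, 0, 0, 1, 0, 0, 0]

theorem isSkewAdjoint_Φ₁ : (gram44 ℤ).IsSkewAdjoint Φ₁ := by
  unfold Matrix.IsSkewAdjoint Matrix.IsAdjointPair gram44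
  decide

theorem isSkewAdjoint_Φ₂ : (gram44 ℤ).IsSkewAdjoint Φ₂ := by
  unfold Matrix.IsSkewAdjoint Matrix.IsAdjointPair gram44
  decide

theorem Φ₁_mul_self : Φ₁ * Φ₁ = 0 := by decide

theorem Φ₂_mul_self : Φ₂ * Φ₂ = 0 := by decide

theorem Φ₁_mul_Φ₂_add_Φ₂_mul_Φ₁ : Φ₁ * Φ₂ + Φ₂ * Φ₁ = 0 := by decide

theorem Φ₁_mul_Φ₂_ne_zero : Φ₁ * Φ₂ ≠ 0 := by decide

def intMatrixToEnd : Matrix (Fin 8) (Fin 8) ℤ →+* Module.End ℝ (Fin 8 → ℝ) :=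
  (toLinAlgEquiv' : Matrix (Fin 8) (Fin 8) ℝ ≃ₐ[ℝ] _).toRingHom.comp (Int.castRingHom ℝ).mapMatrix

theorem intMatrixToEnd_injective : Function.Injective intMatrixToEnd :=
  toLinAlgEquiv'.injective.comp (map_injective Int.cast_injective)

theorem form44_intMatrixToEnd_apply {Φ : Matrix (Fin 8) (Fin 8) ℤ}
    (h : (gram44 ℤ).IsSkewAdjoint Φ) (x y : Fin 8 → ℝ) :
    form44 (intMatrixToEnd Φ x) y = -form44 x (intMatrixToEnd Φ y) := by
  simp only [form44_eq_toLinearMap₂', ← gram44_map_intCast]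
  exact (h.map (Int.castRingHom ℝ)).toLinearMap₂'_mulVec x y

/-- There exist endomorphisms `φ₁, φ₂` of `ℝ⁸`, skew-adjoint with respect
to the signature-(4,4) form, with `φ₁² = φ₂² = 0`, `φ₁φ₂ + φ₂φ₁ = 0` and `φ₁φ₂ ≠ 0`. -/
theorem exists_skew_adjoint_pair :
    ∃ φ₁ φ₂ : (Fin 8 → ℝ) →ₗ[ℝ] (Fin 8 → ℝ),
      (∀ x y : Fin 8 → ℝ, form44 (φ₁ x) y = - form44 x (φ₁ y)) ∧
      (∀ x y : Fin 8 → ℝ, form44 (φ₂ x) y = - form44 x (φ₂ y)) ∧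
      φ₁ ∘ₗ φ₁ = 0 ∧ φ₂ ∘ₗ φ₂ = 0 ∧
      φ₁ ∘ₗ φ₂ + φ₂ ∘ₗ φ₁ = 0 ∧ φ₁ ∘ₗ φ₂ ≠ 0 := by
  refine ⟨intMatrixToEnd Φ₁, intMatrixToEnd Φ₂, form44_intMatrixToEnd_apply isSkewAdjoint_Φ₁,
    form44_intMatrixToEnd_apply isSkewAdjoint_Φ₂, ?_, ?_, ?_, ?_⟩ <;>
    simp only [← Module.End.mul_eq_comp, ← map_mul, ← map_add]
  · rw [Φ₁_mul_self, map_zero]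
  · rw [Φ₂_mul_self, map_zero]
  · rw [Φ₁_mul_Φ₂_add_Φ₂_mul_Φ₁, map_zero]
  · exact (map_ne_zero_iff _ intMatrixToEnd_injective).2 Φ₁_mul_Φ₂_ne_zero
end
end
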